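/- Let f : R^d -> R^K be continuous, and suppose f restricted to a set Q containing x agrees with an affine map g(z) = Vz + a. Let c satisfy f_c(x) > f_s(x) for all s != c. Define d_D(x) = min_{s != c} |<V_c - V_s, x> + a_c - a_s| / ||V_c - V_s||_q, and let d_B(x) be the l_p-distance from x to the closure of the complement of Q. If d_D(x) <= d_B(x), then d_D(x) is the minimal l_p-norm of a perturbation delta such that f_s(x+delta) >= f_c(x+delta) for some s != c. -/

import Mathlib

open scoped BigOperators ENNReal

/-- The `l_p` norm of a vector in `ℝ^d`. -/
noncomputable def pnorm (p : ℝ≥0∞) {d : ℕ} (x : Fin d → ℝ) : ℝ :=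
  ‖(WithLp.equiv p (Fin d → ℝ)).symm x‖

/-- Standard inner product on `ℝ^d`. -/
noncomputable def dotp {d : ℕ} (w x : Fin d → ℝ) : ℝ := ∑ i, w i * x i

/-! Inside the `l_p`-ball of radius `d_B(x)` around `x` the classifier is affine, so against a
class `s` the margin `f_c - f_s` moves along `δ` by `⟨V_c - V_s, δ⟩ ≥ -‖V_c - V_s‖_q ‖δ‖_p`
(Hölder). Hence a perturbation inside the ball that flips the decision has norm at least
`d_D(x)`, and one outside has norm at least `d_B(x) ≥ d_D(x)`. Conversely, Hölder's inequality
is sharp, so some `δ` of norm `d_D(x)` reaches the nearest decision hyperplane; it lies in the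
closed ball, where `f` still agrees with the affine map by continuity. -/

section

variable {d : ℕ}

lemma pnorm_eq_norm_toLp (p : ℝ≥0∞) (x : Fin d → ℝ) : pnorm p x = ‖WithLp.toLp p x‖ := rfl

lemma dotp_eq_dotProduct (w x : Fin d → ℝ) : dotp w x = w ⬝ᵥ x := rfl

section pnorm

variable {p : ℝ≥0∞}

lemma pnorm_eq_sum (hp : 0 < p.toReal) (x : Fin d → ℝ) :
    pnorm p x = (∑ i, |x i| ^ p.toReal) ^ (1 / p.toReal) := by
  rw [pnorm_eq_norm_toLp, PiLp.norm_eq_sum hp]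
  simp only [Real.norm_eq_abs]

lemma pnorm_one (x : Fin d → ℝ) : pnorm 1 x = ∑ i, |x i| := by
  rw [pnorm_eq_sum (by simp)]
  simp

lemma pnorm_top (x : Fin d → ℝ) : pnorm ∞ x = ‖x‖ := by
  simp [pnorm_eq_norm_toLp]

variable [Fact (1 ≤ p)]

lemma pnorm_nonneg (x : Fin d → ℝ) : 0 ≤ pnorm p x := norm_nonneg _

lemma pnorm_pos {x : Fin d → ℝ} (hx : x ≠ 0) : 0 < pnorm p x := by
  simpa [pnorm_eq_norm_toLp] using hx

lemma pnorm_neg (x : Fin d → ℝ) : pnorm p (-x) = pnorm p x := by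
  simp [pnorm_eq_norm_toLp]

lemma pnorm_smul (t : ℝ) (x : Fin d → ℝ) : pnorm p (t • x) = |t| * pnorm p x := by
  simp [pnorm_eq_norm_toLp, norm_smul]

lemma pnorm_single (i : Fin d) (b : ℝ) : pnorm p (Pi.single i b) = |b| :=
  PiLp.norm_single p (fun _ => ℝ) i b

end pnorm

lemma abs_dotp_le_sum_abs_mul_abs (w x : Fin d → ℝ) : |dotp w x| ≤ ∑ i, |w i| * |x i| := by
  simpa only [dotp, abs_mul] using Finset.abs_sum_le_sum_abs (fun i => w i * x i) Finset.univ

lemma abs_dotp_le_pnorm_one_mul_pnorm_top (w x : Fin d → ℝ) :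
    |dotp w x| ≤ pnorm 1 w * pnorm ∞ x := by
  rw [pnorm_one, pnorm_top, Finset.sum_mul]
  refine (abs_dotp_le_sum_abs_mul_abs w x).trans (Finset.sum_le_sum fun i _ => ?_)
  exact mul_le_mul_of_nonneg_left (norm_le_pi_norm x i) (abs_nonneg _)

lemma ENNReal.HolderConjugate.trichotomy (p q : ℝ≥0∞) [p.HolderConjugate q] :
    (p = 1 ∧ q = ∞) ∨ (p = ∞ ∧ q = 1) ∨
      (p ≠ ∞ ∧ q ≠ ∞ ∧ p.toReal.HolderConjugate q.toReal) := by
  by_cases hp1 : p = 1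
  · subst hp1
    exact Or.inl ⟨rfl, ENNReal.HolderConjugate.unique 1 q ∞⟩
  by_cases hpt : p = ∞
  · exact Or.inr (Or.inl ⟨hpt, (ENNReal.HolderConjugate.eq_top_iff_eq_one p q).mp hpt⟩)
  have hqt : q ≠ ∞ := (ENNReal.HolderConjugate.ne_top_iff_ne_one q p).mpr hp1
  exact Or.inr (Or.inr ⟨hpt, hqt, ENNReal.HolderConjugate.toReal_of_ne_top hpt hqt⟩)

lemma abs_sign_le_one (x : ℝ) : |(SignType.sign x : ℝ)| ≤ 1 := by
  rcases SignType.sign x with _ | _ | _ <;> simp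

lemma abs_sign_of_ne_zero {x : ℝ} (hx : x ≠ 0) : |(SignType.sign x : ℝ)| = 1 := by
  rcases hx.lt_or_gt with h | h
  · simp [sign_neg h]
  · simp [sign_pos h]

theorem exists_pnorm_one_le_one_dotp_eq_pnorm_top {w : Fin d → ℝ} (hw : w ≠ 0) :
    ∃ δ : Fin d → ℝ, pnorm 1 δ ≤ 1 ∧ dotp w δ = pnorm ∞ w := by
  obtain ⟨i₀, -⟩ := Function.ne_iff.mp hw
  have : Nonempty (Fin d) := ⟨i₀⟩
  obtain ⟨j, hj⟩ := Finite.exists_max fun i => |w i|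
  refine ⟨Pi.single j (SignType.sign (w j) : ℝ), ?_, ?_⟩
  · rw [pnorm_single]
    exact abs_sign_le_one _
  · rw [dotp_eq_dotProduct, dotProduct_single, self_mul_sign, pnorm_top]
    exact le_antisymm (norm_le_pi_norm w j) ((pi_norm_le_iff_of_nonneg (abs_nonneg _)).mpr hj)

theorem exists_pnorm_top_le_one_dotp_eq_pnorm_one (w : Fin d → ℝ) :
    ∃ δ : Fin d → ℝ, pnorm ∞ δ ≤ 1 ∧ dotp w δ = pnorm 1 w := by
  refine ⟨fun i => SignType.sign (w i), ?_, ?_⟩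
  · rw [pnorm_top]
    exact (pi_norm_le_iff_of_nonneg zero_le_one).mpr fun i => abs_sign_le_one _
  · simp only [dotp, self_mul_sign, pnorm_one]

/-- The witness `δᵢ = sign(wᵢ) (|wᵢ| / ‖w‖_q) ^ (q - 1)` is the equality case of Hölder's
inequality. -/
theorem exists_pnorm_eq_one_dotp_eq_pnorm {p q : ℝ≥0∞} [Fact (1 ≤ q)]
    (hpq : p.toReal.HolderConjugate q.toReal) {w : Fin d → ℝ} (hw : w ≠ 0) :
    ∃ δ : Fin d → ℝ, pnorm p δ = 1 ∧ dotp w δ = pnorm q w := by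
  have hNq : pnorm q w ^ q.toReal = ∑ i, |w i| ^ q.toReal := by
    rw [pnorm_eq_sum hpq.symm.pos, ← Real.rpow_mul (by positivity),
      one_div_mul_cancel hpq.symm.ne_zero, Real.rpow_one]
  set N := pnorm q w
  have hN : 0 < N := pnorm_pos hw
  set u : Fin d → ℝ := fun i => |w i| / N
  have hu : ∀ i, 0 ≤ u i := fun i => div_nonneg (abs_nonneg _) hN.le
  have hsum : ∑ i, u i ^ q.toReal = 1 := by
    simp only [u, Real.div_rpow (abs_nonneg _) hN.le, ← Finset.sum_div, ← hNq]
    exact div_self (by positivity)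
  refine ⟨fun i => SignType.sign (w i) * u i ^ (q.toReal - 1), ?_, ?_⟩
  · have hcoord (i : Fin d) :
        |SignType.sign (w i) * u i ^ (q.toReal - 1)| ^ p.toReal = u i ^ q.toReal := by
      rcases eq_or_ne (w i) 0 with h | h
      · simp [u, h, hpq.pos.ne', hpq.symm.pos.ne']
      · rw [abs_mul, abs_sign_of_ne_zero h, one_mul, abs_of_nonneg (by positivity [hu i]),
          ← Real.rpow_mul (hu i), hpq.symm.sub_one_mul_conj]
    rw [pnorm_eq_sum hpq.pos]
    simp only [hcoord, hsum, Real.one_rpow]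
  · have hcoord (i : Fin d) :
        w i * (SignType.sign (w i) * u i ^ (q.toReal - 1)) = N * u i ^ q.toReal := by
      rw [← mul_assoc, self_mul_sign, (mul_div_cancel₀ |w i| hN.ne').symm, mul_assoc,
        ← Real.rpow_one_add' (hu i) (by linarith [hpq.symm.pos]), add_sub_cancel]
    simp only [dotp, hcoord, ← Finset.mul_sum, hsum, mul_one]

section Holder

variable {p q : ℝ≥0∞} [p.HolderConjugate q]

theorem abs_dotp_le_pnorm_mul_pnorm (w x : Fin d → ℝ) :
    |dotp w x| ≤ pnorm q w * pnorm p x := by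
  rcases ENNReal.HolderConjugate.trichotomy p q with ⟨rfl, rfl⟩ | ⟨rfl, rfl⟩ | ⟨-, -, hpq⟩
  · rw [dotp_eq_dotProduct, dotProduct_comm, ← dotp_eq_dotProduct, mul_comm]
    exact abs_dotp_le_pnorm_one_mul_pnorm_top x w
  · exact abs_dotp_le_pnorm_one_mul_pnorm_top w x
  · rw [pnorm_eq_sum hpq.symm.pos, pnorm_eq_sum hpq.pos]
    exact (abs_dotp_le_sum_abs_mul_abs w x).trans <| Real.inner_le_Lp_mul_Lq_of_nonneg _ hpq.symm
      (fun i _ => abs_nonneg _) fun i _ => abs_nonneg _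

theorem exists_pnorm_le_one_dotp_eq_pnorm (w : Fin d → ℝ) :
    ∃ δ : Fin d → ℝ, pnorm p δ ≤ 1 ∧ dotp w δ = pnorm q w := by
  have : Fact (1 ≤ p) := ⟨ENNReal.HolderConjugate.one_le p q⟩
  have : Fact (1 ≤ q) := ⟨ENNReal.HolderConjugate.one_le q p⟩
  rcases eq_or_ne w 0 with rfl | hw
  · exact ⟨0, by simp [pnorm_eq_norm_toLp], by simp [pnorm_eq_norm_toLp, dotp]⟩
  rcases ENNReal.HolderConjugate.trichotomy p q with ⟨rfl, rfl⟩ | ⟨rfl, rfl⟩ | ⟨-, -, hpq⟩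
  · exact exists_pnorm_one_le_one_dotp_eq_pnorm_top hw
  · exact exists_pnorm_top_le_one_dotp_eq_pnorm_one w
  · obtain ⟨δ, hδ, hwδ⟩ := exists_pnorm_eq_one_dotp_eq_pnorm hpq hw
    exact ⟨δ, hδ.le, hwδ⟩

variable {w : Fin d → ℝ}

theorem div_pnorm_le_pnorm_of_add_dotp_nonpos (hw : w ≠ 0) {b : ℝ} {δ : Fin d → ℝ}
    (h : b + dotp w δ ≤ 0) : b / pnorm q w ≤ pnorm p δ := by
  have : Fact (1 ≤ q) := ⟨ENNReal.HolderConjugate.one_le q p⟩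
  rw [div_le_iff₀' (pnorm_pos hw)]
  calc b ≤ -dotp w δ := by linarith
    _ ≤ |dotp w δ| := neg_le_abs _
    _ ≤ pnorm q w * pnorm p δ := abs_dotp_le_pnorm_mul_pnorm w δ

theorem exists_pnorm_le_div_add_dotp_eq_zero (hw : w ≠ 0) {b : ℝ} (hb : 0 ≤ b) :
    ∃ δ : Fin d → ℝ, pnorm p δ ≤ b / pnorm q w ∧ b + dotp w δ = 0 := by
  have : Fact (1 ≤ p) := ⟨ENNReal.HolderConjugate.one_le p q⟩
  have : Fact (1 ≤ q) := ⟨ENNReal.HolderConjugate.one_le q p⟩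
  have hN : 0 < pnorm q w := pnorm_pos hw
  obtain ⟨u, hu, hwu⟩ := exists_pnorm_le_one_dotp_eq_pnorm (p := p) (q := q) w
  refine ⟨-(b / pnorm q w) • u, ?_, ?_⟩
  · rw [pnorm_smul, abs_neg, abs_of_nonneg (by positivity)]
    exact mul_le_of_le_one_right (by positivity) hu
  · rw [dotp_eq_dotProduct, dotProduct_smul, ← dotp_eq_dotProduct, hwu, smul_eq_mul]
    field_simp
    ring

end Holder

/-- The paper's `d_B(x)`. -/
noncomputable def boundaryDist (p : ℝ≥0∞) (Q : Set (Fin d → ℝ)) (x : Fin d → ℝ) : ℝ :=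
  sInf {r : ℝ | ∃ z ∈ closure Qᶜ, r = pnorm p (x - z)}

section BoundaryDist

variable {p : ℝ≥0∞} [Fact (1 ≤ p)] {Q : Set (Fin d → ℝ)} {x δ : Fin d → ℝ}

theorem add_mem_of_pnorm_lt_boundaryDist (h : pnorm p δ < boundaryDist p Q x) : x + δ ∈ Q := by
  by_contra hδ
  refine h.not_ge (csInf_le ⟨0, ?_⟩ ⟨x + δ, subset_closure hδ, ?_⟩)
  · rintro _ ⟨z, -, rfl⟩
    exact pnorm_nonneg _
  · rw [sub_add_cancel_left, pnorm_neg]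

open Filter Topology in
theorem add_mem_closure_of_pnorm_le_boundaryDist (h₀ : 0 < boundaryDist p Q x)
    (h : pnorm p δ ≤ boundaryDist p Q x) : x + δ ∈ closure Q := by
  have hseg : Set.Ioo 0 1 ⊆ {t : ℝ | x + t • δ ∈ Q} := fun t ht => by
    refine add_mem_of_pnorm_lt_boundaryDist (p := p) ?_
    rw [pnorm_smul, abs_of_pos ht.1]
    exact (mul_le_mul_of_nonneg_left h ht.1.le).trans_lt (mul_lt_of_lt_one_left h₀ ht.2)
  have hlim : Tendsto (fun t : ℝ => x + t • δ) (𝓝[<] 1) (𝓝 (x + δ)) := by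
    have hcont : Continuous fun t : ℝ => x + t • δ := by fun_prop
    simpa using (hcont.tendsto 1).mono_left nhdsWithin_le_nhds
  exact mem_closure_of_tendsto hlim (mem_of_superset (Ioo_mem_nhdsLT zero_lt_one) hseg)

end BoundaryDist

theorem finite_setOf_exists_and_eq {ι α : Type*} [Finite ι] (P : ι → Prop) (F : ι → α) :
    {r | ∃ i, P i ∧ r = F i}.Finite :=
  (Set.finite_range F).subset fun _ ⟨i, _, hi⟩ => ⟨i, hi.symm⟩

section AffineRegion

variable {K : ℕ} {V : Fin K → Fin d → ℝ} {a : Fin K → ℝ} {x : Fin d → ℝ}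
  {f : (Fin d → ℝ) → Fin K → ℝ} {Q : Set (Fin d → ℝ)}

theorem apply_eq_dotp_add_of_mem_closure (hf : Continuous f)
    (hfQ : ∀ z ∈ Q, ∀ r : Fin K, f z r = dotp (V r) z + a r) {z : Fin d → ℝ} (hz : z ∈ closure Q)
    (r : Fin K) : f z r = dotp (V r) z + a r := by
  have hg : Continuous fun z : Fin d → ℝ => fun r => dotp (V r) z + a r := by
    unfold dotp
    fun_prop
  have hEq : Set.EqOn f (fun z r => dotp (V r) z + a r) Q := fun z hz => funext (hfQ z hz)
  exact congrFun (hEq.closure hf hg hz) r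

theorem apply_sub_apply_eq_of_mem (hfQ : ∀ z ∈ Q, ∀ r : Fin K, f z r = dotp (V r) z + a r)
    {δ : Fin d → ℝ} (h : x + δ ∈ Q) (c s : Fin K) :
    f (x + δ) c - f (x + δ) s = dotp (V c - V s) x + (a c - a s) + dotp (V c - V s) δ := by
  rw [hfQ _ h c, hfQ _ h s]
  simp only [dotp_eq_dotProduct, sub_dotProduct, dotProduct_add]
  ring

variable {c : Fin K}

/-- The paper's `d_D(x)`. -/
noncomputable def decisionDist (q : ℝ≥0∞) (V : Fin K → Fin d → ℝ) (a : Fin K → ℝ)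
    (x : Fin d → ℝ) (c : Fin K) : ℝ :=
  sInf {r : ℝ | ∃ s : Fin K, s ≠ c ∧
    r = |dotp (V c - V s) x + (a c - a s)| / pnorm q (V c - V s)}

theorem decisionDist_le {q : ℝ≥0∞} {s : Fin K} (hs : s ≠ c) :
    decisionDist q V a x c ≤ |dotp (V c - V s) x + (a c - a s)| / pnorm q (V c - V s) :=
  csInf_le (finite_setOf_exists_and_eq (· ≠ c) _).bddBelow ⟨s, hs, rfl⟩

theorem exists_decisionDist_eq (q : ℝ≥0∞) {s₀ : Fin K} (hs₀ : s₀ ≠ c) :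
    ∃ s : Fin K, s ≠ c ∧
      decisionDist q V a x c = |dotp (V c - V s) x + (a c - a s)| / pnorm q (V c - V s) :=
  Set.Nonempty.csInf_mem (s := {r | ∃ s, s ≠ c ∧ r = _}) ⟨_, s₀, hs₀, rfl⟩
    (finite_setOf_exists_and_eq (· ≠ c) _)

variable {p q : ℝ≥0∞} [p.HolderConjugate q]

theorem decisionDist_le_pnorm (hfQ : ∀ z ∈ Q, ∀ r : Fin K, f z r = dotp (V r) z + a r)
    (hV : ∀ s : Fin K, s ≠ c → V c ≠ V s)
    (hmargin : ∀ s : Fin K, s ≠ c → 0 < dotp (V c - V s) x + (a c - a s))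
    (hDB : decisionDist q V a x c ≤ boundaryDist p Q x) {δ : Fin d → ℝ} {s : Fin K} (hs : s ≠ c)
    (hδ : f (x + δ) c ≤ f (x + δ) s) : decisionDist q V a x c ≤ pnorm p δ := by
  have : Fact (1 ≤ p) := ⟨ENNReal.HolderConjugate.one_le p q⟩
  rcases lt_or_ge (pnorm p δ) (boundaryDist p Q x) with hnear | hfar
  · have hgap := apply_sub_apply_eq_of_mem hfQ (add_mem_of_pnorm_lt_boundaryDist hnear) c s
    calc decisionDist q V a x c
        ≤ |dotp (V c - V s) x + (a c - a s)| / pnorm q (V c - V s) := decisionDist_le hs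
      _ = (dotp (V c - V s) x + (a c - a s)) / pnorm q (V c - V s) := by
        rw [abs_of_pos (hmargin s hs)]
      _ ≤ pnorm p δ :=
        div_pnorm_le_pnorm_of_add_dotp_nonpos (sub_ne_zero.mpr (hV s hs)) (by linarith)
  · exact hDB.trans hfar

theorem exists_pnorm_le_decisionDist (hf : Continuous f)
    (hfQ : ∀ z ∈ Q, ∀ r : Fin K, f z r = dotp (V r) z + a r)
    (hV : ∀ s : Fin K, s ≠ c → V c ≠ V s)
    (hmargin : ∀ s : Fin K, s ≠ c → 0 < dotp (V c - V s) x + (a c - a s))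
    {s₀ : Fin K} (hs₀ : s₀ ≠ c) (hdB : 0 < boundaryDist p Q x)
    (hDB : decisionDist q V a x c ≤ boundaryDist p Q x) :
    ∃ δ : Fin d → ℝ, ∃ s : Fin K, s ≠ c ∧ f (x + δ) c ≤ f (x + δ) s ∧
      pnorm p δ ≤ decisionDist q V a x c := by
  have : Fact (1 ≤ p) := ⟨ENNReal.HolderConjugate.one_le p q⟩
  obtain ⟨s, hs, hdD⟩ := exists_decisionDist_eq q (V := V) (a := a) (x := x) hs₀
  rw [abs_of_pos (hmargin s hs)] at hdD
  obtain ⟨δ, hδ, hzero⟩ := exists_pnorm_le_div_add_dotp_eq_zero (p := p) (q := q)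
    (sub_ne_zero.mpr (hV s hs)) (hmargin s hs).le
  rw [← hdD] at hδ
  have hmem : x + δ ∈ closure Q := add_mem_closure_of_pnorm_le_boundaryDist hdB (hδ.trans hDB)
  have hgap := apply_sub_apply_eq_of_mem
    (fun z hz => apply_eq_dotp_add_of_mem_closure hf hfQ hz) hmem c s
  exact ⟨δ, s, hs, by linarith, hδ⟩

end AffineRegion

end

theorem stmt4_general {d K : ℕ} (p q : ℝ≥0∞) (hpq : 1/p + 1/q = 1)
    (f : (Fin d → ℝ) → Fin K → ℝ) (hf : Continuous f)
    (Q : Set (Fin d → ℝ)) (V : Fin K → Fin d → ℝ) (a : Fin K → ℝ)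
    (hfQ : ∀ z ∈ Q, ∀ r : Fin K, f z r = dotp (V r) z + a r)
    (x : Fin d → ℝ) (hxQ : x ∈ interior Q) (c : Fin K)
    (hc : ∀ s : Fin K, s ≠ c → f x s < f x c)
    (hV : ∀ s : Fin K, s ≠ c → V c ≠ V s)
    (dD dB : ℝ)
    (hdD : dD = sInf {r : ℝ | ∃ s : Fin K, s ≠ c ∧
        r = |dotp (V c - V s) x + (a c - a s)| / pnorm q (V c - V s)})
    (hdB : dB = sInf {r : ℝ | ∃ z ∈ closure Qᶜ, r = pnorm p (x - z)})
    (hdBpos : 0 < dB) (hDB : dD ≤ dB) :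
    sInf {r : ℝ | ∃ δ : Fin d → ℝ,
        (∃ s : Fin K, s ≠ c ∧ f (x + δ) c ≤ f (x + δ) s) ∧ r = pnorm p δ} = dD := by
  have : p.HolderConjugate q := ENNReal.holderConjugate_iff.mpr (by simpa only [one_div] using hpq)
  have hmargin : ∀ s : Fin K, s ≠ c → 0 < dotp (V c - V s) x + (a c - a s) := fun s hs => by
    have hgap := apply_sub_apply_eq_of_mem hfQ (δ := 0) (by simpa using interior_subset hxQ) c s
    simp only [add_zero, dotp_eq_dotProduct, dotProduct_zero] at hgap ⊢
    linarith [hc s hs]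
  subst hdD hdB
  by_cases hK : ∃ s : Fin K, s ≠ c
  · obtain ⟨s₀, hs₀⟩ := hK
    obtain ⟨δ, s, hs, hδ, hδle⟩ := exists_pnorm_le_decisionDist hf hfQ hV hmargin hs₀ hdBpos hDB
    refine IsLeast.csInf_eq (a := decisionDist q V a x c) ⟨?_, ?_⟩
    · exact ⟨δ, ⟨s, hs, hδ⟩, le_antisymm (decisionDist_le_pnorm hfQ hV hmargin hDB hs hδ) hδle⟩
    · rintro _ ⟨δ', ⟨s', hs', hδ'⟩, rfl⟩
      exact decisionDist_le_pnorm hfQ hV hmargin hDB hs' hδ'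
  · simp only [not_exists, not_not] at hK
    simp [hK]

/-- If d_D(x) ≤ d_B(x) then d_D(x) is the minimal l_p-norm of an adversarial
perturbation for a function agreeing with an affine map on Q. -/
theorem stmt4 {d K : ℕ} (p q : ℝ≥0∞) (hp : 1 ≤ p) (hpq : 1/p + 1/q = 1)
    (f : (Fin d → ℝ) → Fin K → ℝ) (hf : Continuous f)
    (Q : Set (Fin d → ℝ)) (V : Fin K → Fin d → ℝ) (a : Fin K → ℝ)
    (hfQ : ∀ z ∈ Q, ∀ r : Fin K, f z r = dotp (V r) z + a r)
    (x : Fin d → ℝ) (hxQ : x ∈ interior Q) (c : Fin K)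
    (hc : ∀ s : Fin K, s ≠ c → f x s < f x c)
    (hV : ∀ s : Fin K, s ≠ c → V c ≠ V s)
    (dD dB : ℝ)
    (hdD : dD = sInf {r : ℝ | ∃ s : Fin K, s ≠ c ∧
        r = |dotp (V c - V s) x + (a c - a s)| / pnorm q (V c - V s)})
    (hdB : dB = sInf {r : ℝ | ∃ z ∈ closure Qᶜ, r = pnorm p (x - z)})
    (hdBpos : 0 < dB) (hDB : dD ≤ dB) :
    sInf {r : ℝ | ∃ δ : Fin d → ℝ,
        (∃ s : Fin K, s ≠ c ∧ f (x + δ) c ≤ f (x + δ) s) ∧ r = pnorm p δ} = dD :=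
  stmt4_general p q hpq f hf Q V a hfQ x hxQ c hc hV dD dB hdD hdB hdBpos hDB
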